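/- arXiv:1506.06389 — 5 statements merged into one kernel-verified Lean document; each statement's English description precedes it below -/
import Mathlib

section
/- Let E be a nonempty finite set and α, β permutations of E. Form the bipartite graph G whose vertex set is the disjoint union of the set of α-orbits of E and the set of β-orbits of E, where an α-orbit x and a β-orbit y are adjacent if and only if there exists an edge e ∈ E whose α-orbit is x and whose β-orbit is y (and there are no other adjacencies). Then G is a connected graph if and only if the subgroup ⟨α, β⟩ of permutations of E generated by α and β acts transitively on E. -/
/-!
Every `α`-orbit and every `β`-orbit lies in a single `⟨α, β⟩`-orbit, and adjacent vertices
share an element, so each connected component of the graph lies in one `⟨α, β⟩`-orbit.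
Conversely `e` and `α e` have the same `α`-orbit, while `e` and `β e` have the same `β`-orbit,
which is adjacent to the `α`-orbits of both; hence applying a generator, and so any element of
`⟨α, β⟩`, keeps the `α`-orbit of `e` in its component.
-/

open Equiv

/-- The setoid on `E` whose classes are the orbits of the permutation `α`. -/
def orbitSetoid {E : Type*} (α : Equiv.Perm E) : Setoid E :=
  ⟨α.SameCycle, ⟨fun _ => Equiv.Perm.SameCycle.refl α _,
    fun h => h.symm, fun h h' => h.trans h'⟩⟩

/-- The bipartite graph whose vertices are the `α`-orbits and the `β`-orbits of `E`,
an `α`-orbit and a `β`-orbit being adjacent iff they are the orbits of a common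
element `e ∈ E` (and with no other adjacencies). -/
def pairGraph {E : Type*} (α β : Equiv.Perm E) :
    SimpleGraph (Quotient (orbitSetoid α) ⊕ Quotient (orbitSetoid β)) where
  Adj v w :=
    (∃ e : E, v = Sum.inl (Quotient.mk (orbitSetoid α) e) ∧
        w = Sum.inr (Quotient.mk (orbitSetoid β) e)) ∨
    (∃ e : E, v = Sum.inr (Quotient.mk (orbitSetoid β) e) ∧
        w = Sum.inl (Quotient.mk (orbitSetoid α) e))
  symm := by
    constructor
    rintro v w (⟨e, h1, h2⟩ | ⟨e, h1, h2⟩)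
    · exact Or.inr ⟨e, h2, h1⟩
    · exact Or.inl ⟨e, h2, h1⟩
  loopless := by
    constructor
    rintro v (⟨e, h1, h2⟩ | ⟨e, h1, h2⟩) <;> simp [h1] at h2

theorem SimpleGraph.Reachable.eq_of_forall_adj_eq {V β : Type*} {G : SimpleGraph V} (f : V → β)
    (hf : ∀ v w, G.Adj v w → f v = f w) {v w : V} (h : G.Reachable v w) : f v = f w := by
  obtain ⟨p⟩ := h
  induction p with
  | nil => rfl
  | cons hadj _ ih => exact (hf _ _ hadj).trans ih

theorem orbitSetoid_le_orbitRel {E : Type*} {H : Subgroup (Perm E)} {α : Perm E} (hα : α ∈ H) :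
    orbitSetoid α ≤ MulAction.orbitRel H E := by
  rintro x _ ⟨n, rfl⟩
  exact ⟨⟨α ^ (-n), H.zpow_mem hα _⟩, by simp⟩

namespace pairGraph

variable {E : Type*} (α β : Perm E)

def toClosureOrbit : Quotient (orbitSetoid α) ⊕ Quotient (orbitSetoid β) →
    MulAction.orbitRel.Quotient (Subgroup.closure {α, β}) E :=
  Sum.elim
    (Quotient.map' id (orbitSetoid_le_orbitRel (Subgroup.subset_closure (Or.inl rfl))))
    (Quotient.map' id (orbitSetoid_le_orbitRel (Subgroup.subset_closure (Or.inr rfl))))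

variable {α β}

theorem toClosureOrbit_eq_of_adj {v w : Quotient (orbitSetoid α) ⊕ Quotient (orbitSetoid β)}
    (h : (pairGraph α β).Adj v w) : toClosureOrbit α β v = toClosureOrbit α β w := by
  rcases h with ⟨e, rfl, rfl⟩ | ⟨e, rfl, rfl⟩ <;> rfl

theorem adj_inl_inr (e : E) :
    (pairGraph α β).Adj (.inl ⟦e⟧) (.inr (Quotient.mk (orbitSetoid β) e)) :=
  Or.inl ⟨e, rfl, rfl⟩

theorem exists_reachable_inl (v : Quotient (orbitSetoid α) ⊕ Quotient (orbitSetoid β)) :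
    ∃ e : E, (pairGraph α β).Reachable (.inl ⟦e⟧) v := by
  rcases v with q | q <;> induction q using Quotient.inductionOn with | h e => ?_
  · exact ⟨e, .rfl⟩
  · exact ⟨e, (adj_inl_inr e).reachable⟩

theorem reachable_inl_of_mem_closure {g : Perm E} (hg : g ∈ Subgroup.closure {α, β}) (e : E) :
    (pairGraph α β).Reachable (.inl ⟦e⟧) (.inl ⟦g e⟧) := by
  induction hg using Subgroup.closure_induction generalizing e with
  | mem g hg =>
    have hsame : ∀ σ : Perm E, Quotient.mk (orbitSetoid σ) e = ⟦σ e⟧ :=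
      fun σ => Quotient.sound ⟨1, by simp⟩
    rcases hg with rfl | rfl
    · rw [hsame]
    · refine (adj_inl_inr e).reachable.trans ?_
      rw [hsame]
      exact (adj_inl_inr (g e)).symm.reachable
  | one => rfl
  | mul g₁ g₂ _ _ ih₁ ih₂ => exact (ih₂ e).trans (ih₁ (g₂ e))
  | inv g _ ih => simpa using (ih (g⁻¹ e)).symm

end pairGraph

open pairGraph in
theorem pairGraph_connected_iff_transitive_general {E : Type*} [Nonempty E]
    (α β : Equiv.Perm E) :
    (pairGraph α β).Connected ↔
      ∀ x y : E, ∃ g ∈ Subgroup.closure ({α, β} : Set (Equiv.Perm E)), g x = y := by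
  constructor
  · intro hconn x y
    have hxy := ((hconn.preconnected (.inl ⟦x⟧) (.inl ⟦y⟧)).eq_of_forall_adj_eq
      (toClosureOrbit α β) fun _ _ => toClosureOrbit_eq_of_adj)
    obtain ⟨⟨g, hg⟩, hgx⟩ := Quotient.exact hxy.symm
    exact ⟨g, hg, hgx⟩
  · intro htrans
    have hinl (x y : E) : (pairGraph α β).Reachable (.inl ⟦x⟧) (.inl ⟦y⟧) := by
      obtain ⟨g, hg, rfl⟩ := htrans x y
      exact reachable_inl_of_mem_closure hg x
    refine .mk (nonempty := ⟨.inl ⟦Classical.arbitrary E⟧⟩) fun v w => ?_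
    obtain ⟨x, hx⟩ := exists_reachable_inl v
    obtain ⟨y, hy⟩ := exists_reachable_inl w
    exact hx.symm.trans ((hinl x y).trans hy)

/-- The bipartite graph of a pair of permutations of a nonempty finite set is
connected iff the subgroup generated by the two permutations acts transitively. -/
theorem pairGraph_connected_iff_transitive {E : Type*} [Fintype E] [Nonempty E]
    (α β : Equiv.Perm E) :
    (pairGraph α β).Connected ↔
      ∀ x y : E, ∃ g ∈ Subgroup.closure ({α, β} : Set (Equiv.Perm E)), g x = y :=
  pairGraph_connected_iff_transitive_general α β
end

section
/- Let f ∈ ℂ[z] be a nonconstant polynomial all of whose coefficients are algebraic numbers, let v_b ≠ v_w be distinct complex numbers such that f(u) ∈ {v_b, v_w} whenever f′(u) = 0, let u ∈ ℂ satisfy f(u) = v₀ = (v_b + v_w)/2, and let (ψ, η) be the unique pair of affine maps ψ(z) = az + b (a ≠ 0), η(z) = cz + d (c ≠ 0) with ψ(v_b) = −1, ψ(v_w) = +1, η(0) = u, and (ψ∘f∘η)′(0) = 1. Then every coefficient of the polynomial f₁ = ψ∘f∘η is an algebraic number. -/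
open Polynomial

/-!
Write `g = ψ ∘ f ∘ η`, so `g(0) = 0`, `g'(0) = 1` and every critical value of `g` is `±1`.

If `f` attains both `v_b` and `v_w` at critical points, these are roots of `f'`, hence algebraic,
so `v_b`, `v_w`, then `ψ`, then `u` (a root of `f - v₀`) and `c = 1 / (a f'(u))` are algebraic.

Otherwise all critical values of `g` equal one `t = ±1`. Each root of multiplicity `m` of `g - t`
is a root of multiplicity `m - 1` of `g'`, and `g'` has no other roots; counting roots gives
`g = λ (X - r)ⁿ + t`, and `g(0) = 0`, `g'(0) = 1` force `r = n t` and `λ = 1 / (n (-r)ⁿ⁻¹)`.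
-/

section CriticalPoints

variable {F : Type*} [Field F] [CharZero F]

theorem card_roots_eq_card_roots_derivative_add_card_toFinset [DecidableEq F] {h : F[X]}
    (h0 : h ≠ 0) (hcrit : ∀ z, (derivative h).IsRoot z → h.IsRoot z) :
    h.roots.card = (derivative h).roots.card + h.roots.toFinset.card := by
  have hsub : ∀ z ∈ (derivative h).roots, z ∈ h.roots.toFinset := fun z hz => by
    rw [Multiset.mem_toFinset, mem_roots h0]
    exact hcrit z (isRoot_of_mem_roots hz)
  rw [← Multiset.toFinset_sum_count_eq, ← Multiset.sum_count_eq_card hsub, Finset.card_eq_sum_ones,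
    ← Finset.sum_add_distrib]
  refine Finset.sum_congr rfl fun z hz => ?_
  rw [Multiset.mem_toFinset, mem_roots h0] at hz
  rw [count_roots, count_roots, derivative_rootMultiplicity_of_root hz]
  have := (rootMultiplicity_pos h0).mpr hz
  omega

theorem exists_eq_C_mul_X_sub_C_pow_of_isRoot_derivative [IsAlgClosed F] {h : F[X]}
    (hdeg : 0 < h.natDegree) (hcrit : ∀ z, (derivative h).IsRoot z → h.IsRoot z) :
    ∃ r, h = C h.leadingCoeff * (X - C r) ^ h.natDegree := by
  classical
  have hcard := card_roots_eq_card_roots_derivative_add_card_toFinset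
    (ne_zero_of_natDegree_gt hdeg) hcrit
  rw [IsAlgClosed.card_roots_eq_natDegree, IsAlgClosed.card_roots_eq_natDegree,
    natDegree_derivative] at hcard
  obtain ⟨r, hr⟩ := Finset.card_eq_one.mp (by omega : h.roots.toFinset.card = 1)
  have hroots : h.roots = Multiset.replicate h.natDegree r := by
    rw [Multiset.eq_replicate, IsAlgClosed.card_roots_eq_natDegree]
    refine ⟨rfl, fun z hz => ?_⟩
    simpa [hr] using (Multiset.mem_toFinset (s := h.roots)).mpr hz
  refine ⟨r, ?_⟩
  conv_lhs => rw [← C_leadingCoeff_mul_prod_multiset_X_sub_C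
    (IsAlgClosed.card_roots_eq_natDegree (p := h))]
  rw [hroots, Multiset.map_replicate, Multiset.prod_replicate]

end CriticalPoints

theorem eq_natCast_mul_of_eq_C_mul_X_sub_C_pow_add_C {R : Type*} [CommRing R] {g : R[X]}
    {lc r t : R} {n : ℕ} (hn : 0 < n) (hg : g = C lc * (X - C r) ^ n + C t)
    (h0 : g.eval 0 = 0) (h1 : (derivative g).eval 0 = 1) :
    r = n * t ∧ lc * (n * (-r) ^ (n - 1)) = 1 := by
  obtain ⟨m, rfl⟩ : ∃ m, n = m + 1 := ⟨n - 1, by omega⟩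
  subst hg
  have h0' : lc * (-r) ^ (m + 1) + t = 0 := by simpa using h0
  have h1' : lc * ((m + 1) * (-r) ^ m) = 1 := by simpa [derivative_X_sub_C_pow] using h1
  refine ⟨?_, by simpa using h1'⟩
  push_cast
  linear_combination (-(m + 1 : R)) * h0' + (-r) * h1'

section AffineComp

variable {R : Type*} [CommRing R]

noncomputable def affineComp (f : R[X]) (a b c d : R) : R[X] :=
  C a * f.comp (C c * X + C d) + C b

theorem eval_affineComp (f : R[X]) (a b c d z : R) :
    (affineComp f a b c d).eval z = a * f.eval (c * z + d) + b := by
  simp [affineComp]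

theorem derivative_eval_affineComp (f : R[X]) (a b c d z : R) :
    (derivative (affineComp f a b c d)).eval z = a * c * (derivative f).eval (c * z + d) := by
  simp only [affineComp, derivative_add, derivative_mul, derivative_C, zero_mul, derivative_comp,
    derivative_X, mul_one, zero_add, add_zero, eval_mul, eval_C, eval_comp, eval_add, eval_X]
  ring

theorem natDegree_affineComp [IsDomain R] (f : R[X]) {a c : R} (ha : a ≠ 0) (hc : c ≠ 0)
    (b d : R) : (affineComp f a b c d).natDegree = f.natDegree := by
  rw [affineComp, natDegree_add_C, natDegree_C_mul ha, natDegree_comp, natDegree_linear hc,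
    mul_one]

theorem eval_affineComp_eq_of_derivative_eval_eq_zero [IsDomain R] {f : R[X]} {a c e : R}
    (ha : a ≠ 0) (hc : c ≠ 0) (hf : ∀ z, (derivative f).eval z = 0 → f.eval z = e) (b d : R)
    {z : R} (hz : (derivative (affineComp f a b c d)).eval z = 0) :
    (affineComp f a b c d).eval z = a * e + b := by
  rw [derivative_eval_affineComp, mul_eq_zero, mul_eq_zero] at hz
  rw [eval_affineComp, hf _ (hz.resolve_left (not_or.mpr ⟨ha, hc⟩))]

end AffineComp

section AlgebraicCoeffs

variable (K L : Type*) [Field K] [Field L] [Algebra K L]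

noncomputable def algebraicCoeffSubring : Subring L[X] :=
  liftsRing (algebraMap (algebraicClosure K L) L)

variable {K L}

theorem mem_algebraicCoeffSubring {p : L[X]} :
    p ∈ algebraicCoeffSubring K L ↔ ∀ n, IsAlgebraic K (p.coeff n) := by
  rw [algebraicCoeffSubring, ← lifts_iff_liftsRing, lifts_iff_coeff_lifts]
  simp [mem_algebraicClosure_iff]

theorem C_mem_algebraicCoeffSubring {x : L} (hx : IsAlgebraic K x) :
    C x ∈ algebraicCoeffSubring K L :=
  (lifts_iff_liftsRing _ _).mp (C'_mem_lifts ⟨⟨x, mem_algebraicClosure_iff.mpr hx⟩, rfl⟩)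

theorem X_mem_algebraicCoeffSubring : X ∈ algebraicCoeffSubring K L :=
  (lifts_iff_liftsRing _ _).mp (X_mem_lifts _)

theorem comp_mem_algebraicCoeffSubring {p q : L[X]} (hp : p ∈ algebraicCoeffSubring K L)
    (hq : q ∈ algebraicCoeffSubring K L) : p.comp q ∈ algebraicCoeffSubring K L := by
  obtain ⟨P, rfl⟩ := hp
  obtain ⟨Q, rfl⟩ := hq
  exact ⟨P.comp Q, map_comp _ _ _⟩

theorem derivative_mem_algebraicCoeffSubring {p : L[X]} (hp : p ∈ algebraicCoeffSubring K L) :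
    derivative p ∈ algebraicCoeffSubring K L := by
  obtain ⟨P, rfl⟩ := hp
  exact ⟨derivative P, by simp [derivative_map]⟩

theorem isAlgebraic_eval_of_mem_algebraicCoeffSubring {p : L[X]}
    (hp : p ∈ algebraicCoeffSubring K L) {z : L} (hz : IsAlgebraic K z) :
    IsAlgebraic K (p.eval z) := by
  obtain ⟨P, rfl⟩ := hp
  obtain ⟨w, rfl⟩ : ∃ w : algebraicClosure K L, (w : L) = z :=
    ⟨⟨z, mem_algebraicClosure_iff.mpr hz⟩, rfl⟩
  have hw : (mapRingHom (algebraMap _ L) P).eval (w : L) =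
      ((P.eval w : algebraicClosure K L) : L) := by
    rw [coe_mapRingHom, eval_map]
    exact eval₂_at_apply (algebraMap _ L) w
  exact hw ▸ mem_algebraicClosure_iff.mp (P.eval w).2

theorem isAlgebraic_of_isRoot_of_mem_algebraicCoeffSubring {p : L[X]} (hp0 : p ≠ 0)
    (hp : p ∈ algebraicCoeffSubring K L) {z : L} (hz : p.IsRoot z) : IsAlgebraic K z := by
  obtain ⟨P, rfl⟩ := hp
  have hP : P ≠ 0 := by rintro rfl; exact hp0 (Polynomial.map_zero _)
  have hzP : IsAlgebraic (algebraicClosure K L) z := ⟨P, hP, by rwa [aeval_def, ← eval_map]⟩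
  exact hzP.restrictScalars K

theorem isAlgebraic_of_eval_eq {f : L[X]} (hf : 0 < f.natDegree)
    (halg : f ∈ algebraicCoeffSubring K L) {v z : L} (hv : IsAlgebraic K v) (hz : f.eval z = v) :
    IsAlgebraic K z := by
  refine isAlgebraic_of_isRoot_of_mem_algebraicCoeffSubring (p := f - C v) ?_
    (sub_mem halg (C_mem_algebraicCoeffSubring hv)) (by simp [hz])
  exact ne_zero_of_natDegree_gt (n := 0) (by rwa [natDegree_sub_C])

theorem isAlgebraic_eval_of_derivative_eval_eq_zero [CharZero L] {f : L[X]}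
    (hf : 0 < f.natDegree) (halg : f ∈ algebraicCoeffSubring K L) {z : L}
    (hz : (derivative f).eval z = 0) : IsAlgebraic K (f.eval z) := by
  have hf' : derivative f ≠ 0 := fun h => hf.ne' (derivative_eq_zero.mp h)
  exact isAlgebraic_eval_of_mem_algebraicCoeffSubring halg
    (isAlgebraic_of_isRoot_of_mem_algebraicCoeffSubring hf'
      (derivative_mem_algebraicCoeffSubring halg) hz)

theorem isAlgebraic_of_mul_add_eq_neg_one_of_mul_add_eq_one {a b v w : L}
    (hv : IsAlgebraic K v) (hw : IsAlgebraic K w) (hne : v ≠ w) (hav : a * v + b = -1)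
    (haw : a * w + b = 1) :
    IsAlgebraic K a ∧ IsAlgebraic K b := by
  have ha : a = 2 * (w - v)⁻¹ := by
    field_simp [sub_ne_zero.mpr hne.symm]
    linear_combination haw - hav
  have ha_alg : IsAlgebraic K a := ha ▸ (isAlgebraic_natCast 2).mul (hw.sub hv).inv
  exact ⟨ha_alg, (eq_sub_of_add_eq' haw) ▸ isAlgebraic_one.sub (ha_alg.mul hw)⟩

theorem affineComp_mem_algebraicCoeffSubring {f : L[X]} (hf : f ∈ algebraicCoeffSubring K L)
    {a b c d : L} (ha : IsAlgebraic K a) (hb : IsAlgebraic K b) (hd : IsAlgebraic K d)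
    (h1 : (derivative (affineComp f a b c d)).eval 0 = 1) :
    affineComp f a b c d ∈ algebraicCoeffSubring K L := by
  rw [derivative_eval_affineComp, mul_zero, zero_add, mul_right_comm] at h1
  have hc : IsAlgebraic K c := eq_inv_of_mul_eq_one_right h1 ▸
    (ha.mul (isAlgebraic_eval_of_mem_algebraicCoeffSubring
      (derivative_mem_algebraicCoeffSubring hf) hd)).inv
  exact add_mem (mul_mem (C_mem_algebraicCoeffSubring ha) (comp_mem_algebraicCoeffSubring hf
    (add_mem (mul_mem (C_mem_algebraicCoeffSubring hc) X_mem_algebraicCoeffSubring)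
      (C_mem_algebraicCoeffSubring hd)))) (C_mem_algebraicCoeffSubring hb)

theorem mem_algebraicCoeffSubring_of_criticalValues_eq [IsAlgClosed L] [CharZero L] {g : L[X]}
    (hdeg : 0 < g.natDegree) (h0 : g.eval 0 = 0) (h1 : (derivative g).eval 0 = 1)
    {t : L} (ht : IsAlgebraic K t) (hcrit : ∀ z, (derivative g).eval z = 0 → g.eval z = t) :
    g ∈ algebraicCoeffSubring K L := by
  obtain ⟨r, hr⟩ := exists_eq_C_mul_X_sub_C_pow_of_isRoot_derivative (h := g - C t)
    (by rwa [natDegree_sub_C]) fun z hz => by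
      simpa [sub_eq_zero] using hcrit z (by simpa using hz)
  rw [natDegree_sub_C, sub_eq_iff_eq_add] at hr
  obtain ⟨hr_eq, hlc⟩ := eq_natCast_mul_of_eq_C_mul_X_sub_C_pow_add_C hdeg hr h0 h1
  have hr_alg : IsAlgebraic K r := hr_eq ▸ (isAlgebraic_natCast _).mul ht
  have hlc_alg : IsAlgebraic K (g - C t).leadingCoeff := eq_inv_of_mul_eq_one_left hlc ▸
    ((isAlgebraic_natCast _).mul (hr_alg.neg.pow _)).inv
  rw [hr]
  exact add_mem (mul_mem (C_mem_algebraicCoeffSubring hlc_alg)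
    (pow_mem (sub_mem X_mem_algebraicCoeffSubring (C_mem_algebraicCoeffSubring hr_alg)) _))
    (C_mem_algebraicCoeffSubring ht)

end AlgebraicCoeffs

/-- If an unbiased Shabat polynomial `f` has algebraic coefficients, then so does
the biased Shabat polynomial `f₁ = ψ ∘ f ∘ η` obtained from it by the unique
normalizing pair of changes of coordinates. -/
theorem biasing_preserves_algebraic_coefficients (f : Polynomial ℂ)
    (hf : 0 < f.natDegree) (halg : ∀ n : ℕ, IsAlgebraic ℚ (f.coeff n))
    (vb vw : ℂ) (hne : vb ≠ vw)
    (hS : ∀ u : ℂ, f.derivative.eval u = 0 → f.eval u = vb ∨ f.eval u = vw)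
    (u : ℂ) (hu : f.eval u = (vb + vw) / 2)
    (a b c d : ℂ) (ha : a ≠ 0) (hc : c ≠ 0)
    (hpsib : a * vb + b = -1) (hpsiw : a * vw + b = 1) (heta : d = u)
    (hderiv : (C a * f.comp (C c * X + C d) + C b).derivative.eval 0 = 1) :
    ∀ n : ℕ, IsAlgebraic ℚ ((C a * f.comp (C c * X + C d) + C b).coeff n) := by
  subst heta
  refine (mem_algebraicCoeffSubring (p := affineComp f a b c d)).mp ?_
  have hg0 : (affineComp f a b c d).eval 0 = 0 := by
    rw [eval_affineComp, mul_zero, zero_add, hu]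
    linear_combination (hpsib + hpsiw) / 2
  have hgdeg : 0 < (affineComp f a b c d).natDegree := natDegree_affineComp f ha hc b d ▸ hf
  by_cases hw : ∀ z, f.derivative.eval z = 0 → f.eval z = vw
  · exact mem_algebraicCoeffSubring_of_criticalValues_eq hgdeg hg0 hderiv isAlgebraic_one
      fun z hz => hpsiw ▸ eval_affineComp_eq_of_derivative_eval_eq_zero ha hc hw b d hz
  by_cases hb : ∀ z, f.derivative.eval z = 0 → f.eval z = vb
  · exact mem_algebraicCoeffSubring_of_criticalValues_eq hgdeg hg0 hderiv isAlgebraic_one.neg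
      fun z hz => hpsib ▸ eval_affineComp_eq_of_derivative_eval_eq_zero ha hc hb b d hz
  push Not at hw hb
  obtain ⟨z₁, hz₁, hz₁vw⟩ := hw
  obtain ⟨z₂, hz₂, hz₂vb⟩ := hb
  have hf_alg := mem_algebraicCoeffSubring.mpr halg
  have hvb : IsAlgebraic ℚ vb := (hS z₁ hz₁).resolve_right hz₁vw ▸
    isAlgebraic_eval_of_derivative_eval_eq_zero hf hf_alg hz₁
  have hvw : IsAlgebraic ℚ vw := (hS z₂ hz₂).resolve_left hz₂vb ▸
    isAlgebraic_eval_of_derivative_eval_eq_zero hf hf_alg hz₂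
  obtain ⟨ha_alg, hb_alg⟩ :=
    isAlgebraic_of_mul_add_eq_neg_one_of_mul_add_eq_one hvb hvw hne hpsib hpsiw
  have hv₀ : IsAlgebraic ℚ ((vb + vw) / 2) := by
    rw [div_eq_mul_inv]
    exact (hvb.add hvw).mul (isAlgebraic_natCast 2).inv
  exact affineComp_mem_algebraicCoeffSubring hf_alg ha_alg hb_alg
    (isAlgebraic_of_eval_eq hf hf_alg hv₀ hu) hderiv
end

section
/- Let f ∈ ℂ[z] be a biased Shabat polynomial, i.e. f(0) = 0, f′(0) = 1, and f(u) ∈ {−1, +1} for every u ∈ ℂ with f′(u) = 0. Then every coefficient of f is an algebraic number. -/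
/-!
If a coefficient `t` of `f` were transcendental, there would be a derivation `D` of `ℂ` over `ℚ`
with `D t ≠ 0`: take `∂/∂t` on `ℚ[B]` for a transcendence basis `B ∋ t` and extend it along the
formally étale extension `ℚ[B] → ℂ`. Let `f^D` be `f` with `D` applied to its coefficients, so
`deg f^D ≤ deg f`. The critical values `±1` of `f` are killed by `D`, so at a critical point `γ`
of multiplicity `m` the polynomial `f - f(γ)` has a root of order `m + 1` and
`f^D = (f - f(γ))^D` one of order `m`; hence `f' ∣ f^D`. Also `X² ∣ f^D`, because `D 0 = D 1 = 0`,
and `X` is prime to `f'` as `f'(0) = 1`. So `X² f'`, of degree `deg f + 1`, divides `f^D`, which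
forces `f^D = 0`, contradicting `D t ≠ 0`.
-/

theorem Derivation.pow_dvd_apply_of_pow_succ_dvd {R A : Type*} [CommSemiring R] [CommRing A]
    [Algebra R A] (D : Derivation R A A) {a b : A} {n : ℕ} (h : a ^ (n + 1) ∣ b) :
    a ^ n ∣ D b := by
  obtain ⟨c, rfl⟩ := h
  rw [D.leibniz, D.leibniz_pow, smul_eq_mul, smul_eq_mul, nsmul_eq_mul, smul_eq_mul,
    Nat.add_sub_cancel]
  exact dvd_add (dvd_mul_of_dvd_left (pow_dvd_pow a n.le_succ) _)
    ⟨c * ((n + 1 : ℕ) * D a), by ring⟩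

theorem Derivation.exists_extension_of_formallyEtale {R S T : Type*} [CommRing R] [CommRing S]
    [CommRing T] [Algebra R S] [Algebra R T] [Algebra S T] [IsScalarTower R S T]
    [Algebra.FormallyEtale S T] (d : Derivation R S T) :
    ∃ d' : Derivation R T T, ∀ s, d' (algebraMap S T s) = d s := by
  let φ : Ω[T⁄R] →ₗ[T] T := d.liftKaehlerDifferential.liftBaseChange T ∘ₗ
    (KaehlerDifferential.tensorKaehlerEquivOfFormallyEtale R S T).symm.toLinearMap
  refine ⟨φ.compDer (KaehlerDifferential.D R T), fun s => ?_⟩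
  simp [φ, KaehlerDifferential.tensorKaehlerEquivOfFormallyEtale_symm_D_algebraMap]

namespace AlgebraicIndependent

open MvPolynomial

variable {ι K L : Type*} [CommRing K] [CommRing L] [Algebra K L] {v : ι → L}
  (hv : AlgebraicIndependent K v)

noncomputable def pderiv (i : ι) : Derivation K (Algebra.adjoin K (Set.range v)) L :=
  Derivation.mk' ((aeval v).toLinearMap ∘ₗ (MvPolynomial.pderiv i).toLinearMap ∘ₗ
    hv.repr.toLinearMap) fun a b => by
      simp [Derivation.leibniz, hv.aeval_repr, Subalgebra.smul_def]

theorem pderiv_aevalEquiv_X (i : ι) : hv.pderiv i (hv.aevalEquiv (X i)) = 1 := by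
  simp [pderiv, repr]

end AlgebraicIndependent

open scoped IntermediateField.algebraAdjoinAdjoin in
theorem IsTranscendenceBasis.formallyEtale_adjoin {ι K L : Type*} [Field K] [Field L]
    [Algebra K L] [CharZero K] {v : ι → L} (hv : IsTranscendenceBasis K v) :
    Algebra.FormallyEtale (Algebra.adjoin K (Set.range v)) L := by
  have := hv.isAlgebraic_field
  have : Algebra.FormallyEtale (Algebra.adjoin K (Set.range v))
    (IntermediateField.adjoin K (Set.range v)) := .of_isLocalization (nonZeroDivisors _)
  have : Algebra.FormallyEtale (IntermediateField.adjoin K (Set.range v)) L :=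
    .of_isSeparable _ _
  exact .comp _ (IntermediateField.adjoin K (Set.range v)) _

open MvPolynomial AlgebraicIndependent in
theorem Transcendental.exists_derivation_apply_ne_zero {K L : Type*} [Field K] [Field L]
    [Algebra K L] [CharZero K] {x : L} (hx : Transcendental K x) :
    ∃ d : Derivation K L L, d x ≠ 0 := by
  obtain ⟨s, hxs, hs⟩ := exists_isTranscendenceBasis_superset (s := {x}) (R := K)
    (algebraicIndependent_unique_type_iff.mpr hx)
  have := hs.formallyEtale_adjoin
  obtain ⟨d, hd⟩ := (hs.1.pderiv ⟨x, hxs rfl⟩).exists_extension_of_formallyEtale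
  refine ⟨d, ?_⟩
  have hdx := hd (hs.1.aevalEquiv (X ⟨x, hxs rfl⟩))
  rw [hs.1.pderiv_aevalEquiv_X, algebraMap_aevalEquiv, aeval_X] at hdx
  simp [hdx]

open Polynomial

theorem Polynomial.dvd_of_forall_pow_rootMultiplicity_dvd {K : Type*} [Field K] [IsAlgClosed K]
    {p q : K[X]} (hp : p ≠ 0) (h : ∀ γ, (X - C γ) ^ p.rootMultiplicity γ ∣ q) : p ∣ q := by
  rcases eq_or_ne q 0 with rfl | hq
  · exact dvd_zero p
  classical
  rw [IsAlgClosed.dvd_iff_roots_le_roots hp hq, Multiset.le_iff_count]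
  intro γ
  rw [count_roots, count_roots]
  exact (le_rootMultiplicity_iff hq).mpr (h γ)

namespace Differential

theorem natDegree_mapCoeffs_le {A : Type*} [CommRing A] [Differential A] (f : A[X]) :
    (mapCoeffs f).natDegree ≤ f.natDegree :=
  natDegree_le_iff_coeff_eq_zero.mpr fun n hn => by
    rw [coeff_mapCoeffs, coeff_eq_zero_of_natDegree_lt hn, map_zero]

theorem pow_rootMultiplicity_derivative_dvd_mapCoeffs {A : Type*} [CommRing A]
    [NoZeroDivisors A] [CharZero A] [Differential A] (f : A[X]) {γ : A}
    (hγ : (f.eval γ)′ = 0) : (X - C γ) ^ f.derivative.rootMultiplicity γ ∣ mapCoeffs f := by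
  set g := f - C (f.eval γ)
  have hg : mapCoeffs g = mapCoeffs f := by simp [g, hγ]
  have hroot : g.IsRoot γ := by simp [g]
  have hmult : f.derivative.rootMultiplicity γ = g.rootMultiplicity γ - 1 := by
    rw [← derivative_rootMultiplicity_of_root hroot]; simp [g]
  rw [hmult, ← hg]
  have hdvd := pow_rootMultiplicity_dvd g γ
  cases h : g.rootMultiplicity γ with
  | zero => simp
  | succ m =>
    rw [h] at hdvd
    exact mapCoeffs.pow_dvd_apply_of_pow_succ_dvd hdvd

variable {K : Type*} [Field K] [IsAlgClosed K] [CharZero K] [Differential K]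

theorem derivative_dvd_mapCoeffs {f : K[X]} (hf : f.derivative ≠ 0)
    (hcrit : ∀ γ, f.derivative.IsRoot γ → (f.eval γ)′ = 0) : f.derivative ∣ mapCoeffs f := by
  refine dvd_of_forall_pow_rootMultiplicity_dvd hf fun γ => ?_
  by_cases hγ : f.derivative.IsRoot γ
  · exact pow_rootMultiplicity_derivative_dvd_mapCoeffs f (hcrit γ hγ)
  · simp [rootMultiplicity_eq_zero hγ]

theorem mapCoeffs_eq_zero_of_constant_critical_values {f : K[X]} (hcoeff1 : f.coeff 1 ≠ 0)
    (hconst0 : (f.coeff 0)′ = 0) (hconst1 : (f.coeff 1)′ = 0)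
    (hcrit : ∀ γ, f.derivative.IsRoot γ → (f.eval γ)′ = 0) :
    mapCoeffs f = 0 := by
  have hX : ¬ X ∣ f.derivative := by simpa [X_dvd_iff, coeff_derivative] using hcoeff1
  have hf : f.derivative ≠ 0 := fun h => hX (h ▸ dvd_zero X)
  have hX2 : X ^ 2 ∣ mapCoeffs f := by
    refine X_pow_dvd_iff.mpr fun d hd => ?_
    interval_cases d
    exacts [hconst0, hconst1]
  have hdvd : X ^ 2 * f.derivative ∣ mapCoeffs f :=
    (irreducible_X.coprime_iff_not_dvd.mpr hX).pow_left.mul_dvd hX2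
      (derivative_dvd_mapCoeffs hf hcrit)
  by_contra hne
  have hdeg := natDegree_le_of_dvd hdvd hne
  have hle := natDegree_mapCoeffs_le f
  have hpos : f.natDegree ≠ 0 := fun h => hcoeff1 (coeff_eq_zero_of_natDegree_lt (by omega))
  rw [natDegree_mul (pow_ne_zero 2 X_ne_zero) hf, natDegree_pow, natDegree_X,
    natDegree_derivative] at hdeg
  omega

end Differential

/-- Every biased Shabat polynomial has algebraic coefficients: if `f ∈ ℂ[z]`
satisfies `f(0) = 0`, `f'(0) = 1`, and `f(u) ∈ {-1, 1}` whenever `f'(u) = 0`,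
then every coefficient of `f` is an algebraic number. -/
theorem biased_shabat_coeffs_algebraic (f : Polynomial ℂ)
    (h0 : f.eval 0 = 0) (h1 : f.derivative.eval 0 = 1)
    (hS : ∀ u : ℂ, f.derivative.eval u = 0 → f.eval u = -1 ∨ f.eval u = 1) :
    ∀ n : ℕ, IsAlgebraic ℚ (f.coeff n) := by
  intro n
  by_contra hn
  obtain ⟨D, hD⟩ := Transcendental.exists_derivation_apply_ne_zero hn
  let _ : Differential ℂ := ⟨D.restrictScalars ℤ⟩
  have hcoeff1 : f.coeff 1 = 1 := by
    simpa [coeff_derivative] using (coeff_zero_eq_eval_zero f.derivative).trans h1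
  have hD0 : Differential.mapCoeffs f = 0 := by
    refine Differential.mapCoeffs_eq_zero_of_constant_critical_values (by simp [hcoeff1])
      (by simp [coeff_zero_eq_eval_zero, h0]) (by simp [hcoeff1]) fun γ hγ => ?_
    rcases hS γ hγ with h | h <;> simp [h]
  exact hD ((Differential.coeff_mapCoeffs f n).symm.trans (by rw [hD0, coeff_zero]))
end

section
/- The action of the absolute Galois group on biased Shabat polynomials is faithful: for every field automorphism σ of Q̄ with σ ≠ id, there exists a polynomial f ∈ Q̄[z] with f(0) = 0, f′(0) = 1, and f(u) ∈ {−1, +1} for every u ∈ Q̄ with f′(u) = 0, such that f^σ ≠ f, where f^σ is obtained by applying σ to each coefficient of f. -/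
/-!
Pick `α` with `σ α ≠ α` and a primitive `P` of `X (X - 1)² (X - α)³`. Belyi's theorem gives
`B ∈ ℚ[X]` whose critical values, and whose values at the (algebraic) critical values of `P`,
lie in `{-1, 1}`; after an affine change of variable `A`, `f = B ∘ P ∘ A` is a biased Shabat
polynomial. If `f^σ = f`, then `B ∘ W = B ∘ W^σ` for `W = P ∘ A`, because `B` has rational
coefficients. Right factors of equal degree of one composite differ by an affine map, so
`(W^σ)' = ζ W'`: hence `σ` preserves the root multiplicities `1, 2, 3` of `W'`, fixes the roots
`A⁻¹ 0`, `A⁻¹ 1`, `A⁻¹ α`, and therefore fixes their affine ratio `α`.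
-/

open Polynomial

namespace Polynomial

section CritValues

variable {R : Type*} [CommRing R]

def critValues (p : R[X]) : Set R := p.eval '' {x | p.derivative.IsRoot x}

lemma critValues_eq_empty_of_derivative_eq_C {p : R[X]} {c : R} (hc : c ≠ 0)
    (h : p.derivative = C c) : critValues p = ∅ := by
  simp [critValues, h, hc]

lemma critValues_finite [IsDomain R] {p : R[X]} (h : p.derivative ≠ 0) :
    (critValues p).Finite :=
  (finite_setOfPred_isRoot h).image _

lemma critValues_comp_subset [IsDomain R] {p q : R[X]} {T : Set R} (hp : critValues p ⊆ T)
    (hq : Set.MapsTo p.eval (critValues q) T) : critValues (p.comp q) ⊆ T := by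
  rintro _ ⟨x, hx, rfl⟩
  rw [Set.mem_ofPred_eq, IsRoot.def, derivative_comp, eval_mul, eval_comp, mul_eq_zero] at hx
  change (p.comp q).eval x ∈ T
  rw [eval_comp]
  rcases hx with hx | hx
  · exact hq ⟨x, hx, rfl⟩
  · exact hp ⟨_, hx, rfl⟩

lemma critValues_comp_C_mul_X_add_C_subset [IsDomain R] (p : R[X]) {a : R} (ha : a ≠ 0)
    (b : R) : critValues (p.comp (C a * X + C b)) ⊆ critValues p := by
  refine critValues_comp_subset subset_rfl ?_
  rw [critValues_eq_empty_of_derivative_eq_C ha (by simp)]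
  exact Set.mapsTo_empty _ _

end CritValues

lemma derivative_surjective {K : Type*} [Field K] [CharZero K] :
    Function.Surjective (derivative : K[X] → K[X]) := by
  intro p
  induction p using Polynomial.induction_on' with
  | add p q hp hq =>
    obtain ⟨P, rfl⟩ := hp
    obtain ⟨Q, rfl⟩ := hq
    exact ⟨P + Q, derivative_add⟩
  | monomial n a =>
    refine ⟨monomial (n + 1) (a / (n + 1)), ?_⟩
    rw [derivative_monomial]
    congr 1
    push_cast
    field_simp

section Ritt

variable {F : Type*} [Field F]

lemma natDegree_geom_sum₂_le {Y Z : F[X]} {w : ℕ} (hY : Y.natDegree ≤ w)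
    (hZ : Z.natDegree ≤ w) (k : ℕ) :
    (∑ i ∈ Finset.range k, Y ^ i * Z ^ (k - 1 - i)).natDegree ≤ (k - 1) * w := by
  refine natDegree_sum_le_of_forall_le _ _ fun i hi => ?_
  have hik := Finset.mem_range.mp hi
  calc (Y ^ i * Z ^ (k - 1 - i)).natDegree
      ≤ i * w + (k - 1 - i) * w :=
        natDegree_mul_le_of_le (natDegree_pow_le_of_le i hY) (natDegree_pow_le_of_le _ hZ)
    _ = (k - 1) * w := by rw [← add_mul]; congr 1; omega

lemma coeff_geom_sum₂ {Y Z : F[X]} (hY : Y.natDegree = Z.natDegree)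
    (hYZ : Y.leadingCoeff = Z.leadingCoeff) (k : ℕ) :
    (∑ i ∈ Finset.range k, Y ^ i * Z ^ (k - 1 - i)).coeff ((k - 1) * Z.natDegree) =
      k * Z.leadingCoeff ^ (k - 1) := by
  have hterm : ∀ i ∈ Finset.range k,
      (Y ^ i * Z ^ (k - 1 - i)).coeff ((k - 1) * Z.natDegree) = Z.leadingCoeff ^ (k - 1) := by
    intro i hi
    have hik := Finset.mem_range.mp hi
    have hdeg : (k - 1) * Z.natDegree = (Y ^ i).natDegree + (Z ^ (k - 1 - i)).natDegree := by
      rw [natDegree_pow, natDegree_pow, hY, ← add_mul]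
      congr 1
      omega
    rw [hdeg, coeff_mul_degree_add_degree, leadingCoeff_pow, leadingCoeff_pow, hYZ, ← pow_add]
    congr 1
    omega
  rw [finsetSum_coeff, Finset.sum_congr rfl hterm, Finset.sum_const, Finset.card_range,
    nsmul_eq_mul]

lemma comp_sub_comp_eq_mul (u Y Z : F[X]) :
    u.comp Y - u.comp Z = (∑ k ∈ Finset.range (u.natDegree + 1),
      C (u.coeff k) * ∑ i ∈ Finset.range k, Y ^ i * Z ^ (k - 1 - i)) * (Y - Z) := by
  have hsum : ∀ W : F[X],
      u.comp W = ∑ k ∈ Finset.range (u.natDegree + 1), C (u.coeff k) * W ^ k :=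
    fun W => by rw [comp_eq_sum_left, sum_over_range _ fun _ => by rw [map_zero, zero_mul]]
  rw [hsum, hsum, ← Finset.sum_sub_distrib, Finset.sum_mul]
  refine Finset.sum_congr rfl fun k _ => ?_
  rw [mul_assoc, geom_sum₂_mul, mul_sub]

/-- In the factorisation `comp_sub_comp_eq_mul`, all `k < n` terms of the cofactor have degree
below `(n - 1) w`, and the `n` summands of the top term share the leading coefficient
`lc(Z)^(n-1)`; they add up to `n • lc(Z)^(n-1) ≠ 0` in characteristic zero. -/
lemma natDegree_comp_sub_comp [CharZero F] {u Y Z : F[X]} (hu : 0 < u.natDegree)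
    (hZ : 0 < Z.natDegree) (hY : Y.natDegree = Z.natDegree)
    (hYZ : Y.leadingCoeff = Z.leadingCoeff) (hne : Y ≠ Z) :
    (u.comp Y - u.comp Z).natDegree = (u.natDegree - 1) * Z.natDegree + (Y - Z).natDegree := by
  set n := u.natDegree
  set w := Z.natDegree
  set v := ∑ k ∈ Finset.range (n + 1),
      C (u.coeff k) * ∑ i ∈ Finset.range k, Y ^ i * Z ^ (k - 1 - i)
  have hcoeff : v.coeff ((n - 1) * w) = u.leadingCoeff * (n * Z.leadingCoeff ^ (n - 1)) := by
    rw [finsetSum_coeff, Finset.sum_eq_single n, coeff_C_mul, coeff_geom_sum₂ hY hYZ]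
    · rfl
    · intro k hk hkn
      rw [coeff_C_mul]
      rcases k with _ | k
      · simp
      have hlt : (k + 1 - 1) * w < (n - 1) * w := by
        have := Finset.mem_range_succ_iff.mp hk
        exact Nat.mul_lt_mul_of_pos_right (by omega) hZ
      rw [coeff_eq_zero_of_natDegree_lt
        ((natDegree_geom_sum₂_le hY.le le_rfl (k + 1)).trans_lt hlt), mul_zero]
    · simp
  have hv : v.coeff ((n - 1) * w) ≠ 0 := by
    rw [hcoeff]
    simp [ne_zero_of_natDegree_gt hZ, ne_zero_of_natDegree_gt hu, hu.ne']
  have hvdeg : v.natDegree = (n - 1) * w := by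
    refine le_antisymm (natDegree_sum_le_of_forall_le _ _ fun k hk => ?_)
      (le_natDegree_of_ne_zero hv)
    refine (natDegree_C_mul_le _ _).trans ((natDegree_geom_sum₂_le hY.le le_rfl k).trans ?_)
    have := Finset.mem_range_succ_iff.mp hk
    exact Nat.mul_le_mul_right _ (by omega)
  have hfac : u.comp Y - u.comp Z = v * (Y - Z) := comp_sub_comp_eq_mul u Y Z
  rw [hfac, natDegree_mul (fun h => hv (by rw [h, coeff_zero])) (sub_ne_zero.mpr hne), hvdeg]

lemma natDegree_comp_C_mul_sub_comp_le {u : F[X]} {ζ : F} (hζ : ζ ^ u.natDegree = 1)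
    (Q : F[X]) :
    (u.comp (C ζ * Q) - u.comp Q).natDegree ≤ (u.natDegree - 1) * Q.natDegree := by
  have hsub : u.comp (C ζ * Q) - u.comp Q = (u.comp (C ζ * X) - u).comp Q := by
    rw [sub_comp, comp_assoc, mul_comp, C_comp, X_comp]
  rw [hsub, natDegree_comp]
  refine Nat.mul_le_mul_right _ ?_
  rcases Nat.eq_zero_or_pos u.natDegree with hu | hu
  · obtain ⟨c, rfl⟩ : ∃ c, u = C c := ⟨_, eq_C_of_natDegree_eq_zero hu⟩
    simp
  have hζ0 : ζ ≠ 0 := by rintro rfl; simp [zero_pow hu.ne'] at hζ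
  have hdeg : (u.comp (C ζ * X)).natDegree = u.natDegree := by
    rw [natDegree_comp, natDegree_C_mul_X ζ hζ0, mul_one]
  have hlc : (u.comp (C ζ * X)).leadingCoeff = u.leadingCoeff := by
    rw [leadingCoeff_comp (by rw [natDegree_C_mul_X ζ hζ0]; exact one_ne_zero),
      leadingCoeff_C_mul_X, hζ, mul_one]
  have hp0 : u.comp (C ζ * X) ≠ 0 := ne_zero_of_natDegree_gt (hdeg ▸ hu)
  rcases eq_or_ne (u.comp (C ζ * X) - u) 0 with h0 | h0
  · simp [h0]
  have := natDegree_lt_natDegree h0 (degree_sub_lt_left (by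
    rw [degree_eq_natDegree hp0, degree_eq_natDegree (ne_zero_of_natDegree_gt hu), hdeg]) hp0 hlc)
  omega

/-- With `ζ Q₁` matching the leading coefficient of `Q₂`, the difference
`u ∘ Q₂ - u ∘ (ζ Q₁) = u ∘ Q₁ - u ∘ (ζ Q₁)` has degree at most `(n - 1) w`, while
`natDegree_comp_sub_comp` computes it as `(n - 1) w + deg (Q₂ - ζ Q₁)`. -/
theorem exists_eq_C_mul_add_C_of_comp_eq_comp [CharZero F] {u Q₁ Q₂ : F[X]}
    (hu : 0 < u.natDegree) (hQ₁ : 0 < Q₁.natDegree) (hQ : Q₂.natDegree = Q₁.natDegree)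
    (h : u.comp Q₁ = u.comp Q₂) : ∃ z c : F, z ≠ 0 ∧ Q₂ = C z * Q₁ + C c := by
  have hlc₁ : Q₁.leadingCoeff ≠ 0 := leadingCoeff_ne_zero.mpr (ne_zero_of_natDegree_gt hQ₁)
  have hlc₂ : Q₂.leadingCoeff ≠ 0 :=
    leadingCoeff_ne_zero.mpr (ne_zero_of_natDegree_gt (hQ ▸ hQ₁))
  set ζ := Q₂.leadingCoeff / Q₁.leadingCoeff
  have hζ0 : ζ ≠ 0 := div_ne_zero hlc₂ hlc₁
  have hζ : ζ ^ u.natDegree = 1 := by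
    have hlc := congrArg leadingCoeff h
    rw [leadingCoeff_comp hQ₁.ne', leadingCoeff_comp (hQ ▸ hQ₁.ne')] at hlc
    rw [div_pow, ← mul_left_cancel₀ (leadingCoeff_ne_zero.mpr (ne_zero_of_natDegree_gt hu)) hlc,
      div_self (pow_ne_zero _ hlc₁)]
  have hY : (C ζ * Q₁).natDegree = Q₁.natDegree := natDegree_C_mul hζ0
  have hYlc : Q₂.leadingCoeff = (C ζ * Q₁).leadingCoeff := by
    rw [leadingCoeff_C_mul_of_isUnit hζ0.isUnit, div_mul_cancel₀ _ hlc₁]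
  refine ⟨ζ, (Q₂ - C ζ * Q₁).coeff 0, hζ0, ?_⟩
  suffices hR : (Q₂ - C ζ * Q₁).natDegree = 0 by
    rw [← eq_C_of_natDegree_eq_zero hR]
    ring
  by_contra hR
  have hne : Q₂ ≠ C ζ * Q₁ := fun h' => hR (by rw [h', sub_self, natDegree_zero])
  have hlower := natDegree_comp_sub_comp hu (hY ▸ hQ₁) (hQ.trans hY.symm) hYlc hne
  have hupper := natDegree_comp_C_mul_sub_comp_le hζ Q₁
  rw [← h, ← neg_sub, natDegree_neg, hY] at hlower
  omega

end Ritt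

end Polynomial

section Belyi

variable {K : Type*} [Field K] [Algebra ℚ K]

local notation "φ" => algebraMap ℚ K

lemma mapsTo_eval_map_algebraMap {q : ℚ[X]} {A : Set ℚ} (h : Set.MapsTo q.eval A {0, 1}) :
    Set.MapsTo (q.map φ).eval (φ '' A) {0, 1} := by
  rintro _ ⟨r, hr, rfl⟩
  change (q.map φ).eval (φ r) ∈ _
  rw [eval_map_algebraMap, aeval_algebraMap_apply_eq_algebraMap_eval]
  rcases h hr with h | h <;> simp_all

/-- A critical value `q ρ`, `q' ρ = 0`, is the image of the class of `q` in `ℚ[X] ⧸ (q')`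
under a `ℚ`-algebra map, so it is a root of the minimal polynomial of that class, whose degree
is at most `deg q' < deg q`. -/
lemma exists_natDegree_lt_forall_critValues_aeval_eq_zero {q : ℚ[X]} (hq : 0 < q.natDegree) :
    ∃ D : ℚ[X], D ≠ 0 ∧ D.natDegree < q.natDegree ∧
      ∀ y ∈ critValues (q.map φ), aeval y D = 0 := by
  have hq' : q.derivative ≠ 0 := fun h => hq.ne' (derivative_eq_zero.mp h)
  have := (AdjoinRoot.powerBasis hq').finite
  set z := AdjoinRoot.mk q.derivative q
  refine ⟨minpoly ℚ z, minpoly.ne_zero (Algebra.IsIntegral.isIntegral z), ?_, ?_⟩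
  · calc (minpoly ℚ z).natDegree ≤ Module.finrank ℚ (AdjoinRoot q.derivative) :=
          minpoly.natDegree_le z
      _ = q.derivative.natDegree := finrank_quotient_span_eq_natDegree
      _ < q.natDegree := natDegree_derivative_lt hq.ne'
  · rintro _ ⟨ρ, hρ, rfl⟩
    have hρ' : q.derivative.eval₂ (Algebra.ofId ℚ K) ρ = 0 := by
      simpa [derivative_map, eval_map_algebraMap, aeval_def] using hρ
    have hz : AdjoinRoot.liftAlgHom q.derivative (Algebra.ofId ℚ K) ρ hρ' z =
        (q.map φ).eval ρ := by
      simp [z, eval_map_algebraMap, aeval_def]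
    change aeval ((q.map φ).eval ρ) _ = 0
    rw [← hz, aeval_algHom_apply, minpoly.aeval, map_zero]

lemma exists_critValues_subset_range {q : ℚ[X]} (hq : q ≠ 0) :
    ∃ G : ℚ[X], 0 < G.natDegree ∧
      (∀ x : K, aeval x q = 0 → aeval x G ∈ Set.range φ) ∧
      critValues (G.map φ) ⊆ Set.range φ := by
  induction h : q.natDegree using Nat.strong_induction_on generalizing q with
  | _ n ih =>
  rcases Nat.eq_zero_or_pos n with rfl | hn
  · refine ⟨X, by simp, fun x hx => ?_,
      by simp [critValues_eq_empty_of_derivative_eq_C one_ne_zero]⟩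
    rw [eq_C_of_natDegree_eq_zero h, aeval_C, map_eq_zero_iff _ (RingHom.injective φ)] at hx
    exact absurd (leadingCoeff_eq_zero.mp (by rwa [leadingCoeff, h])) hq
  obtain ⟨D, hD0, hDdeg, hD⟩ :=
    exists_natDegree_lt_forall_critValues_aeval_eq_zero (K := K) (h ▸ hn)
  obtain ⟨G, hG, hGroots, hGcrit⟩ := ih _ (h ▸ hDdeg) hD0 rfl
  refine ⟨G.comp q, by rw [natDegree_comp]; exact Nat.mul_pos hG (h ▸ hn), fun x hx => ?_, ?_⟩
  · rw [aeval_comp, hx, ← map_zero φ, aeval_algebraMap_apply_eq_algebraMap_eval]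
    exact Set.mem_range_self _
  · rw [Polynomial.map_comp]
    refine critValues_comp_subset hGcrit fun y hy => ?_
    simpa [eval_map_algebraMap] using hGroots y (hD y hy)

/-- `X ^ m (1 - X) ^ n`, scaled to take the value `1` at its critical point `m / (m + n)`. -/
noncomputable def belyiGadget (m n : ℕ) : ℚ[X] :=
  C ((m + n : ℚ) ^ (m + n) / ((m : ℚ) ^ m * (n : ℚ) ^ n)) * X ^ m * (1 - X) ^ n

lemma natDegree_belyiGadget {m n : ℕ} (hm : 0 < m) (hn : 0 < n) :
    (belyiGadget m n).natDegree = m + n := by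
  have hc : (m + n : ℚ) ^ (m + n) / ((m : ℚ) ^ m * (n : ℚ) ^ n) ≠ 0 := by positivity
  have h1X : (1 - X : ℚ[X]).natDegree = 1 := by
    rw [← neg_sub, natDegree_neg, ← C_1, natDegree_X_sub_C]
  rw [belyiGadget, mul_assoc, natDegree_C_mul hc, natDegree_mul (by simp) (pow_ne_zero _ ?_),
    natDegree_pow, natDegree_pow, natDegree_X, h1X, mul_one, mul_one]
  exact fun h => by simp [h] at h1X

lemma mapsTo_belyiGadget {m n : ℕ} (hm : 0 < m) (hn : 0 < n) :
    Set.MapsTo (belyiGadget m n).eval {0, 1, (m : ℚ) / (m + n)} {0, 1} := by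
  have hmn : (m + n : ℚ) ≠ 0 := by positivity
  rintro x (rfl | rfl | rfl)
  · simp [belyiGadget, hm.ne']
  · simp [belyiGadget, hn.ne']
  · refine Or.inr (Set.mem_singleton_iff.mpr ?_)
    have h1 : 1 - (m : ℚ) / (m + n) = n / (m + n) := by field_simp; ring
    simp only [belyiGadget, eval_mul, eval_C, eval_pow, eval_X, eval_sub, eval_one, h1, div_pow]
    field_simp
    ring

lemma X_mul_one_sub_X_mul_derivative_belyiGadget {m n : ℕ} (hm : 0 < m) (hn : 0 < n) :
    X * (1 - X) * derivative (belyiGadget m n) =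
      (C (m : ℚ) - C ((m : ℚ) + n) * X) * belyiGadget m n := by
  obtain ⟨m, rfl⟩ : ∃ k, m = k + 1 := ⟨m - 1, by omega⟩
  obtain ⟨n, rfl⟩ : ∃ k, n = k + 1 := ⟨n - 1, by omega⟩
  rw [belyiGadget, mul_assoc (C _), derivative_C_mul, derivative_mul, derivative_X_pow,
    derivative_pow, derivative_sub, derivative_one, derivative_X, Nat.add_sub_cancel,
    Nat.add_sub_cancel]
  push_cast
  simp only [map_add, map_natCast, map_one]
  ring

lemma critValues_belyiGadget_subset {m n : ℕ} (hm : 0 < m) (hn : 0 < n) :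
    critValues ((belyiGadget m n).map φ) ⊆ {0, 1} := by
  rintro _ ⟨y, hy, rfl⟩
  have hid := congrArg (fun p => (p.map φ).eval y)
    (X_mul_one_sub_X_mul_derivative_belyiGadget hm hn)
  simp only [Polynomial.map_mul, Polynomial.map_sub, Polynomial.map_one, map_X, map_C,
    ← derivative_map, eval_mul, eval_sub, eval_one, eval_X, eval_C, hy.eq_zero, mul_zero] at hid
  rcases mul_eq_zero.mp hid.symm with hy' | hy'
  · have hs : y = φ ((m : ℚ) / (m + n)) := by
      rw [map_div₀, eq_div_iff ((_root_.map_ne_zero φ).mpr (by positivity))]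
      linear_combination -hy'
    change ((belyiGadget m n).map φ).eval y ∈ _
    rw [hs]
    exact mapsTo_eval_map_algebraMap (mapsTo_belyiGadget hm hn) (Set.mem_image_of_mem _ (by simp))
  · exact Or.inl hy'

lemma exists_nat_div_add_eq {s : ℚ} (hs₀ : 0 < s) (hs₁ : s < 1) :
    ∃ m n : ℕ, 0 < m ∧ 0 < n ∧ (m : ℚ) / (m + n) = s := by
  have hnum : 0 < s.num := Rat.num_pos.mpr hs₀
  have hlt : s.num < s.den := Rat.num_lt_denom_iff.mpr hs₁
  refine ⟨s.num.toNat, s.den - s.num.toNat, by omega, by omega, ?_⟩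
  have hm : ((s.num.toNat : ℕ) : ℚ) = s.num := by exact_mod_cast Int.toNat_of_nonneg hnum.le
  rw [Nat.cast_sub (by omega), add_sub_cancel, hm, Rat.num_div_den]

lemma exists_affine_mapsTo {t : ℚ} (ht₀ : t ≠ 0) (ht₁ : t ≠ 1) :
    ∃ a b s : ℚ, a ≠ 0 ∧ 0 < s ∧ s < 1 ∧
      Set.MapsTo (fun x => a * x + b) {0, 1, t} {0, 1, s} := by
  rcases lt_or_gt_of_ne ht₀ with ht | ht
  · have h1t : 1 - t ≠ 0 := by linarith
    refine ⟨-(1 - t)⁻¹, (1 - t)⁻¹, (1 - t)⁻¹, by simpa using h1t, by bound, ?_, ?_⟩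
    · rw [inv_lt_one₀ (by linarith)]
      linarith
    · rintro x (rfl | rfl | rfl)
      · simp
      · simp
      · refine Or.inr (Or.inl ?_)
        field_simp
        ring
  rcases lt_or_gt_of_ne ht₁ with ht' | ht'
  · exact ⟨1, 0, t, one_ne_zero, ht, ht', by rintro x (rfl | rfl | rfl) <;> simp⟩
  · refine ⟨t⁻¹, 0, t⁻¹, by positivity, by positivity, inv_lt_one_of_one_lt₀ ht', ?_⟩
    rintro x (rfl | rfl | rfl) <;> simp [ht₀]

lemma exists_mapsTo_zero_one_of_ne {t : ℚ} (ht₀ : t ≠ 0) (ht₁ : t ≠ 1) :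
    ∃ g : ℚ[X], 0 < g.natDegree ∧ Set.MapsTo g.eval {0, 1, t} {0, 1} ∧
      critValues (g.map φ) ⊆ {0, 1} := by
  obtain ⟨a, b, s, ha, hs₀, hs₁, hL⟩ := exists_affine_mapsTo ht₀ ht₁
  obtain ⟨m, n, hm, hn, rfl⟩ := exists_nat_div_add_eq hs₀ hs₁
  refine ⟨(belyiGadget m n).comp (C a * X + C b), ?_, ?_, ?_⟩
  · rw [natDegree_comp, natDegree_belyiGadget hm hn, natDegree_linear ha]
    omega
  · intro x hx
    simpa using mapsTo_belyiGadget hm hn (hL hx)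
  · rw [Polynomial.map_comp, Polynomial.map_add, Polynomial.map_mul, map_X, map_C, map_C]
    exact (critValues_comp_C_mul_X_add_C_subset _ ((_root_.map_ne_zero φ).mpr ha) _).trans
      (critValues_belyiGadget_subset hm hn)

/-- Induction on the number of points of `T` outside `{0, 1}`: the polynomial of
`exists_mapsTo_zero_one_of_ne` for one such point `t` sends `0, 1, t` into `{0, 1}`. -/
lemma exists_mapsTo_zero_one (T : Finset ℚ) :
    ∃ B : ℚ[X], 0 < B.natDegree ∧ Set.MapsTo B.eval T {0, 1} ∧
      critValues (B.map φ) ⊆ {0, 1} := by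
  classical
  induction h : (T \ {0, 1}).card using Nat.strong_induction_on generalizing T with
  | _ N ih =>
  by_cases hT : T ⊆ {0, 1}
  · refine ⟨X, by simp, fun x hx => by simpa using hT hx, ?_⟩
    simp [critValues_eq_empty_of_derivative_eq_C one_ne_zero]
  obtain ⟨t, htT, ht⟩ := Finset.not_subset.mp hT
  simp only [Finset.mem_insert, Finset.mem_singleton, not_or] at ht
  obtain ⟨g, hg, hgt, hgcrit⟩ := exists_mapsTo_zero_one_of_ne (K := K) ht.1 ht.2
  set T' := {0, 1} ∪ T.image g.eval
  have hsub : T' \ {0, 1} ⊆ ((T \ {0, 1}).erase t).image g.eval := by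
    intro y hy
    obtain ⟨hyT', hy01⟩ := Finset.mem_sdiff.mp hy
    obtain ⟨x, hxT, rfl⟩ : ∃ x ∈ T, g.eval x = y := by
      rcases Finset.mem_union.mp hyT' with hy | hy
      · exact absurd hy hy01
      · simpa using hy
    refine Finset.mem_image_of_mem _
      (Finset.mem_erase.mpr ⟨?_, Finset.mem_sdiff.mpr ⟨hxT, ?_⟩⟩)
    · rintro rfl
      exact hy01 (by simpa using hgt (by simp : x ∈ ({0, 1, x} : Set ℚ)))
    · intro hx
      exact hy01 (by simpa using hgt (by simp at hx ⊢; tauto))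
  have hlt : (T' \ {0, 1}).card < N := by
    calc (T' \ {0, 1}).card ≤ ((T \ {0, 1}).erase t).card :=
          (Finset.card_le_card hsub).trans Finset.card_image_le
      _ < N := h ▸ Finset.card_erase_lt_of_mem (by simp [htT, ht.1, ht.2])
  obtain ⟨B, hB, hBT', hBcrit⟩ := ih _ hlt T' rfl
  refine ⟨B.comp g, by rw [natDegree_comp]; exact Nat.mul_pos hB hg, fun x hx => ?_, ?_⟩
  · simpa using hBT' (by simp [T', Finset.mem_image_of_mem _ hx] : g.eval x ∈ T')
  · rw [Polynomial.map_comp]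
    refine critValues_comp_subset hBcrit
      ((mapsTo_eval_map_algebraMap (A := {0, 1}) ?_).mono_left ?_)
    · exact hBT'.mono_left (by simp [T', Set.insert_subset_iff])
    · exact hgcrit.trans (by simp [Set.image_pair])

theorem exists_belyi {S : Set K} (hS : S.Finite) (halg : ∀ x ∈ S, IsAlgebraic ℚ x) :
    ∃ B : ℚ[X], 0 < B.natDegree ∧ Set.MapsTo (B.map φ).eval S {0, 1} ∧
      critValues (B.map φ) ⊆ {0, 1} := by
  have hq : ∏ x ∈ hS.toFinset, minpoly ℚ x ≠ 0 := Finset.prod_ne_zero_iff.mpr fun x hx =>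
    minpoly.ne_zero (halg x (hS.mem_toFinset.mp hx)).isIntegral
  obtain ⟨G, hG, hGS, hGcrit⟩ := exists_critValues_subset_range (K := K) hq
  have hG' : (G.map φ).derivative ≠ 0 := by
    rw [derivative_map, Ne, Polynomial.map_eq_zero_iff (RingHom.injective φ), derivative_eq_zero]
    exact hG.ne'
  set V := critValues (G.map φ) ∪ (G.map φ).eval '' S
  have hV : V ⊆ φ '' (φ ⁻¹' V) := by
    rw [Set.image_preimage_eq_inter_range]
    refine fun y hy => ⟨hy, ?_⟩
    rcases hy with hy | ⟨x, hx, rfl⟩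
    · exact hGcrit hy
    · change (G.map φ).eval x ∈ _
      rw [eval_map_algebraMap]
      refine hGS x ?_
      rw [map_prod]
      exact Finset.prod_eq_zero (hS.mem_toFinset.mpr hx) (minpoly.aeval ℚ x)
  have hT : (φ ⁻¹' V).Finite :=
    ((critValues_finite hG').union (hS.image _)).preimage (RingHom.injective φ).injOn
  obtain ⟨D, hD, hDT, hDcrit⟩ := exists_mapsTo_zero_one (K := K) hT.toFinset
  have hDV : Set.MapsTo (D.map φ).eval V {0, 1} :=
    (mapsTo_eval_map_algebraMap (by simpa using hDT)).mono_left hV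
  refine ⟨D.comp G, by rw [natDegree_comp]; exact Nat.mul_pos hD hG, fun x hx => ?_, ?_⟩
  · change ((D.comp G).map φ).eval x ∈ _
    rw [Polynomial.map_comp, eval_comp]
    exact hDV (Or.inr (Set.mem_image_of_mem _ hx))
  · rw [Polynomial.map_comp]
    exact critValues_comp_subset hDcrit (hDV.mono_left Set.subset_union_left)

theorem exists_belyi_neg_one_one {S : Set K} (hS : S.Finite)
    (halg : ∀ x ∈ S, IsAlgebraic ℚ x) :
    ∃ B : ℚ[X], 0 < B.natDegree ∧ Set.MapsTo (B.map φ).eval S {-1, 1} ∧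
      critValues (B.map φ) ⊆ {-1, 1} := by
  obtain ⟨B, hB, hBS, hBcrit⟩ := exists_belyi hS halg
  set L : ℚ[X] := C 2 * X + C (-1)
  have hL : Set.MapsTo (L.map φ).eval {0, 1} {-1, 1} := by
    rintro _ (rfl | rfl) <;> norm_num [L]
  refine ⟨L.comp B, ?_, fun x hx => ?_, ?_⟩
  · rw [natDegree_comp, natDegree_linear two_ne_zero, one_mul]
    exact hB
  · change ((L.comp B).map φ).eval x ∈ _
    rw [Polynomial.map_comp, eval_comp]
    exact hL (hBS hx)
  · have : CharZero K := charZero_of_injective_algebraMap (RingHom.injective φ)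
    rw [Polynomial.map_comp]
    refine critValues_comp_subset ?_ (hL.mono_left hBcrit)
    rw [critValues_eq_empty_of_derivative_eq_C (two_ne_zero (α := K)) (by simp [L])]
    exact Set.empty_subset _

end Belyi

section Galois

variable {K : Type*} [Field K]

lemma exists_affine_normalization [IsAlgClosed K] {F : K[X]} (hF : 0 < F.natDegree)
    (h0 : 0 ∉ critValues F) : ∃ s z : K, s ≠ 0 ∧ (F.comp (C s * X + C z)).eval 0 = 0 ∧
      (F.comp (C s * X + C z)).derivative.eval 0 = 1 := by
  obtain ⟨z, hz⟩ := IsAlgClosed.exists_root F (natDegree_pos_iff_degree_pos.mp hF).ne'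
  have hF' : F.derivative.eval z ≠ 0 := fun h => h0 ⟨z, h, hz⟩
  refine ⟨(F.derivative.eval z)⁻¹, z, inv_ne_zero hF', by simpa using hz, ?_⟩
  simp [derivative_comp, hF']

lemma rootMultiplicity_C_mul {p : K[X]} {a : K} (ha : a ≠ 0) (x : K) :
    (C a * p).rootMultiplicity x = p.rootMultiplicity x := by
  rcases eq_or_ne p 0 with rfl | hp
  · simp
  rw [rootMultiplicity_mul (mul_ne_zero (C_ne_zero.mpr ha) hp), rootMultiplicity_C, zero_add]

lemma rootMultiplicity_derivative_comp_C_mul_X_add_C (P : K[X]) {s : K} (hs : s ≠ 0)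
    (z x : K) : (P.comp (C s * X + C z)).derivative.rootMultiplicity x =
      P.derivative.rootMultiplicity (s * x + z) := by
  rw [derivative_comp, show derivative (C s * X + C z) = C s by simp, rootMultiplicity_C_mul hs,
    rootMultiplicity_comp_C_mul_X_add_C _ _ _ _ hs.isUnit]

lemma rootMultiplicity_derivative_apply_eq [CharZero K] (σ : K ≃+* K) {u W : K[X]}
    (hu : u.map σ.toRingHom = u) (hu₀ : 0 < u.natDegree) (hW : 0 < W.natDegree)
    (h : (u.comp W).map σ.toRingHom = u.comp W) (x : K) :
    W.derivative.rootMultiplicity (σ x) = W.derivative.rootMultiplicity x := by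
  rw [Polynomial.map_comp, hu] at h
  obtain ⟨ζ, c, hζ, hWσ⟩ :=
    exists_eq_C_mul_add_C_of_comp_eq_comp hu₀ hW (natDegree_map _) h.symm
  have hder : W.derivative.map σ.toRingHom = C ζ * W.derivative := by
    rw [← derivative_map, hWσ, derivative_add, derivative_C, add_zero, derivative_C_mul]
  rw [eq_rootMultiplicity_map (f := σ.toRingHom) σ.injective x, hder, rootMultiplicity_C_mul hζ]
  rfl

lemma eq_of_rootMultiplicity_eq {α : K} (hα₀ : α ≠ 0) (hα₁ : α ≠ 1) {c y : K}
    (hc : c = 0 ∨ c = 1 ∨ c = α)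
    (h : (X * (X - C 1) ^ 2 * (X - C α) ^ 3).rootMultiplicity y =
      (X * (X - C 1) ^ 2 * (X - C α) ^ 3).rootMultiplicity c) : y = c := by
  classical
  have hQ : (X * (X - C 1) ^ 2 * (X - C α) ^ 3 : K[X]) ≠ 0 :=
    ((monic_X.mul ((monic_X_sub_C 1).pow 2)).mul ((monic_X_sub_C α).pow 3)).ne_zero
  simp only [← count_roots, roots_mul hQ, roots_mul (left_ne_zero_of_mul hQ), roots_pow,
    roots_X, roots_X_sub_C, Multiset.count_add, Multiset.count_nsmul,
    Multiset.count_singleton] at h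
  rcases hc with rfl | rfl | rfl <;> split_ifs at h <;> simp_all

lemma apply_eq_of_rootMultiplicity_derivative_apply_eq (σ : K ≃+* K) {α s z : K}
    (hα₀ : α ≠ 0) (hα₁ : α ≠ 1) (hs : s ≠ 0) {P : K[X]}
    (hP : P.derivative = X * (X - C 1) ^ 2 * (X - C α) ^ 3)
    (hσ : ∀ x, (P.comp (C s * X + C z)).derivative.rootMultiplicity (σ x) =
      (P.comp (C s * X + C z)).derivative.rootMultiplicity x) : σ α = α := by
  have hfix : ∀ c, (c = 0 ∨ c = 1 ∨ c = α) → σ ((c - z) / s) = (c - z) / s := by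
    intro c hc
    have hA : s * ((c - z) / s) + z = c := by field_simp; ring
    have h := hσ ((c - z) / s)
    rw [rootMultiplicity_derivative_comp_C_mul_X_add_C _ hs,
      rootMultiplicity_derivative_comp_C_mul_X_add_C _ hs, hA, hP] at h
    exact mul_left_cancel₀ hs
      (add_right_cancel ((eq_of_rootMultiplicity_eq hα₀ hα₁ hc h).trans hA.symm))
  have hα : α = ((α - z) / s - (0 - z) / s) / ((1 - z) / s - (0 - z) / s) := by
    field_simp
    ring
  rw [hα, map_div₀, map_sub, map_sub, hfix α (by simp), hfix 0 (by simp), hfix 1 (by simp)]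

end Galois

/-- The action of the absolute Galois group on biased Shabat polynomials is
faithful: every nontrivial field automorphism `σ` of `Q̄` moves some biased
Shabat polynomial `f ∈ Q̄[z]`. -/
theorem galois_action_on_biased_shabat_faithful
    (σ : AlgebraicClosure ℚ ≃+* AlgebraicClosure ℚ)
    (hσ : σ ≠ RingEquiv.refl (AlgebraicClosure ℚ)) :
    ∃ f : Polynomial (AlgebraicClosure ℚ),
      f.eval 0 = 0 ∧ f.derivative.eval 0 = 1 ∧
      (∀ u : AlgebraicClosure ℚ,
        f.derivative.eval u = 0 → f.eval u = -1 ∨ f.eval u = 1) ∧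
      f.map σ.toRingHom ≠ f := by
  obtain ⟨α, hα⟩ : ∃ α, σ α ≠ α := by
    by_contra! h
    exact hσ (RingEquiv.ext h)
  have hα₀ : α ≠ 0 := by rintro rfl; exact hα (map_zero σ)
  have hα₁ : α ≠ 1 := by rintro rfl; exact hα (map_one σ)
  obtain ⟨P, hP⟩ := derivative_surjective (X * (X - C 1) ^ 2 * (X - C α) ^ 3)
  have hP₀ : P.derivative ≠ 0 := hP ▸
    ((monic_X.mul ((monic_X_sub_C 1).pow 2)).mul ((monic_X_sub_C α).pow 3)).ne_zero
  have hP₁ : 0 < P.natDegree := Nat.pos_of_ne_zero (mt derivative_eq_zero.mpr hP₀)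
  obtain ⟨B, hB, hBP, hBcrit⟩ := exists_belyi_neg_one_one (critValues_finite hP₀)
    fun x _ => (AlgebraicClosure.isAlgebraic ℚ).isAlgebraic x
  have hB₀ : 0 < (B.map (algebraMap ℚ (AlgebraicClosure ℚ))).natDegree := by
    rwa [natDegree_map]
  have hF := critValues_comp_subset hBcrit hBP
  obtain ⟨s, z, hs, hf₀, hf₁⟩ :=
    exists_affine_normalization (F := (B.map (algebraMap ℚ _)).comp P)
      (by rw [natDegree_comp]; exact Nat.mul_pos hB₀ hP₁) fun h => by simpa using hF h
  refine ⟨_, hf₀, hf₁, fun x hx => hF (critValues_comp_C_mul_X_add_C_subset _ hs _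
    ⟨x, hx, rfl⟩), fun h => hα ?_⟩
  rw [comp_assoc] at h
  refine apply_eq_of_rootMultiplicity_derivative_apply_eq σ hα₀ hα₁ hs hP
    (rootMultiplicity_derivative_apply_eq σ ?_ hB₀ ?_ h)
  · rw [Polynomial.map_map, Subsingleton.elim (σ.toRingHom.comp _) (algebraMap ℚ _)]
  · rw [natDegree_comp, natDegree_linear hs]
    exact Nat.mul_pos hP₁ one_pos
end

section
/- Let R = (E_R, α_R, β_R, e_R) and S = (E_S, α_S, β_S, e_S) be biased dessins, and let J ⊆ E_R × E_S be the orbit of (e_R, e_S) under the subgroup of permutations of E_R × E_S generated by α_R × α_S and β_R × β_S; the join R ∨ S is J equipped with the restricted permutations and chosen edge (e_R, e_S). Then: (1) the coordinate projections J → E_R and J → E_S are morphisms of biased dessins R ∨ S → R and R ∨ S → S; and (2) for every biased dessin T = (E_T, α_T, β_T, e_T) and morphisms ψ_R : T → R and ψ_S : T → S, the map t ↦ (ψ_R(t), ψ_S(t)) takes values in J and is a morphism of biased dessins T → R ∨ S. Thus R ∨ S is the least upper bound of R and S for the order given by existence of morphisms. -/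
/-- The subgroup of permutations of `E_R × E_S` generated by the componentwise
products `α_R × α_S` and `β_R × β_S`. -/
def joinGroup {ER ES : Type*} (αR βR : Equiv.Perm ER) (αS βS : Equiv.Perm ES) :
    Subgroup (Equiv.Perm (ER × ES)) :=
  Subgroup.closure ({Equiv.prodCongr αR αS, Equiv.prodCongr βR βS} :
    Set (Equiv.Perm (ER × ES)))

/-- The edge set of the join `R ∨ S` of two biased dessins: the orbit of the pair
of chosen edges `(e_R, e_S)` under `joinGroup`. -/
def joinOrbit {ER ES : Type*} (αR βR : Equiv.Perm ER) (eR : ER)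
    (αS βS : Equiv.Perm ES) (eS : ES) : Set (ER × ES) :=
  MulAction.orbit (joinGroup αR βR αS βS) (eR, eS)

/-- The join `R ∨ S` of two biased dessins is their least upper bound for the order
given by existence of morphisms: (0) its edge set `J` contains `(e_R, e_S)` and is
invariant under the product permutations; (1) the coordinate projections are
morphisms of biased dessins `R ∨ S → R` and `R ∨ S → S`; (2) for any biased dessin
`T` and morphisms `ψ_R : T → R`, `ψ_S : T → S`, the pairing `t ↦ (ψ_R t, ψ_S t)`
takes values in `J` and is a morphism `T → R ∨ S`. -/
theorem join_is_least_upper_bound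
    {ER ES : Type*} [Fintype ER] [Fintype ES]
    (αR βR : Equiv.Perm ER) (eR : ER)
    (αS βS : Equiv.Perm ES) (eS : ES)
    (hR : ∀ x y : ER, ∃ g ∈ Subgroup.closure ({αR, βR} : Set (Equiv.Perm ER)), g x = y)
    (hS : ∀ x y : ES, ∃ g ∈ Subgroup.closure ({αS, βS} : Set (Equiv.Perm ES)), g x = y) :
    (eR, eS) ∈ joinOrbit αR βR eR αS βS eS ∧
    (∀ p ∈ joinOrbit αR βR eR αS βS eS,
      Equiv.prodCongr αR αS p ∈ joinOrbit αR βR eR αS βS eS ∧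
      Equiv.prodCongr βR βS p ∈ joinOrbit αR βR eR αS βS eS) ∧
    (∀ p : ER × ES,
      (Equiv.prodCongr αR αS p).1 = αR p.1 ∧ (Equiv.prodCongr βR βS p).1 = βR p.1 ∧
      (Equiv.prodCongr αR αS p).2 = αS p.2 ∧ (Equiv.prodCongr βR βS p).2 = βS p.2) ∧
    (∀ (ET : Type) (_ : Fintype ET) (αT βT : Equiv.Perm ET) (eT : ET),
      (∀ x y : ET, ∃ g ∈ Subgroup.closure ({αT, βT} : Set (Equiv.Perm ET)), g x = y) →
      ∀ (ψR : ET → ER) (ψS : ET → ES),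
        ψR ∘ αT = αR ∘ ψR → ψR ∘ βT = βR ∘ ψR → ψR eT = eR →
        ψS ∘ αT = αS ∘ ψS → ψS ∘ βT = βS ∘ ψS → ψS eT = eS →
        (∀ t : ET, (ψR t, ψS t) ∈ joinOrbit αR βR eR αS βS eS) ∧
        (∀ t : ET, (ψR (αT t), ψS (αT t)) = Equiv.prodCongr αR αS (ψR t, ψS t)) ∧
        (∀ t : ET, (ψR (βT t), ψS (βT t)) = Equiv.prodCongr βR βS (ψR t, ψS t)) ∧
        (ψR eT, ψS eT) = (eR, eS)) := by
  have hmemα : Equiv.prodCongr αR αS ∈ joinGroup αR βR αS βS :=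
    Subgroup.subset_closure (by simp)
  have hmemβ : Equiv.prodCongr βR βS ∈ joinGroup αR βR αS βS :=
    Subgroup.subset_closure (by simp)
  refine ⟨⟨1, by simp⟩, ?_, ?_, ?_⟩
  · rintro p ⟨⟨g, hg⟩, rfl⟩
    exact ⟨⟨⟨_, mul_mem hmemα hg⟩, rfl⟩, ⟨⟨_, mul_mem hmemβ hg⟩, rfl⟩⟩
  · intro p; exact ⟨rfl, rfl, rfl, rfl⟩
  · intro ET _ αT βT eT hT ψR ψS hα hβ he hα' hβ' he'
    have key : ∀ g ∈ Subgroup.closure ({αT, βT} : Set (Equiv.Perm ET)),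
        ∃ h ∈ joinGroup αR βR αS βS, ∀ t, (ψR (g t), ψS (g t)) = h (ψR t, ψS t) := by
      intro g hg
      induction hg using Subgroup.closure_induction with
      | mem x hx =>
        rcases hx with rfl | rfl
        · exact ⟨Equiv.prodCongr αR αS, hmemα, fun t =>
            Prod.ext (congrFun hα t) (congrFun hα' t)⟩
        · exact ⟨Equiv.prodCongr βR βS, hmemβ, fun t =>
            Prod.ext (congrFun hβ t) (congrFun hβ' t)⟩
      | one => exact ⟨1, one_mem _, fun t => rfl⟩
      | mul x y hx hy ihx ihy =>
        obtain ⟨h1, h1m, h1e⟩ := ihx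
        obtain ⟨h2, h2m, h2e⟩ := ihy
        refine ⟨h1 * h2, mul_mem h1m h2m, fun t => ?_⟩
        calc (ψR ((x * y) t), ψS ((x * y) t)) = h1 (ψR (y t), ψS (y t)) := h1e (y t)
          _ = (h1 * h2) (ψR t, ψS t) := by rw [h2e t]; rfl
      | inv x hx ihx =>
        obtain ⟨h1, h1m, h1e⟩ := ihx
        refine ⟨h1⁻¹, inv_mem h1m, fun t => ?_⟩
        have := h1e (x⁻¹ t)
        simp only [Equiv.Perm.inv_def, Equiv.apply_symm_apply] at this
        rw [this]; simp
    refine ⟨?_, fun t => Prod.ext (congrFun hα t) (congrFun hα' t),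
      fun t => Prod.ext (congrFun hβ t) (congrFun hβ' t), by rw [he, he']⟩
    intro t
    obtain ⟨g, hg, hge⟩ := hT eT t
    obtain ⟨h, hm, he2⟩ := key g hg
    refine ⟨⟨h, hm⟩, ?_⟩
    have := he2 eT
    rw [hge, he, he'] at this
    exact this.symm
end
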